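/- For every odd integer n ≥ 5, the optimal value of the Lovász theta SDP of the complement C̄_n of the n-cycle equals (1 + cos(π/n))/cos(π/n); that is, (1 + cos(π/n))/cos(π/n) is the greatest element of the set of objective values ∑_{i=1}^n X_{ii} taken over all primal feasible matrices X. -/

import Mathlib

/-- Adjacency in the complement `C̄_n` of the `n`-cycle on the vertices `1, …, n`:
`i` and `j` are adjacent iff `i ≠ j` and `i - j ≢ ±1 (mod n)`.  Here `i % n + 1` is the
cyclic successor of a vertex `i ∈ {1, …, n}`. -/
def antiCycleAdj (n i j : ℕ) : Prop :=
  i ≠ j ∧ ¬(i % n + 1 = j ∨ j % n + 1 = i)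

/-- A real symmetric `(1+n) × (1+n)` matrix `X` (rows/columns indexed `0, 1, …, n`) is primal
feasible for the Lovász theta SDP of the graph on vertices `{1, …, n}` with adjacency `adj` if
`X` is positive semidefinite, `X 0 0 = 1`, `X i i = X 0 i` for `i ∈ {1, …, n}`, and `X i j = 0`
whenever `i` and `j` are adjacent. -/
def thetaPrimalFeasible (n : ℕ) (adj : ℕ → ℕ → Prop)
    (X : Matrix (Fin (n + 1)) (Fin (n + 1)) ℝ) : Prop :=
  X.PosSemidef ∧ X 0 0 = 1 ∧
    (∀ i : Fin (n + 1), i.val ≠ 0 → X i i = X 0 i) ∧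
    (∀ i j : Fin (n + 1), i.val ≠ 0 → j.val ≠ 0 → adj i.val j.val → X i j = 0)

/-!
Upper bound (weak duality). For a feasible `X` and any positive semidefinite `W` with `W 0 i = -1`,
`W i i = 1` and `W i j = 0` on the non-edges of the graph, `0 ≤ ⟨W, X⟩ = W 0 0 - ∑ X i i`. For
`C̄_n` take `W = (c / (1 + c)) v vᵀ + (1 / (1 + c)) G`, where `c = cos (π / n)`,
`v = (-(1 + c) / c, 1, …, 1)` and `G i j = cos (2π m (i - j) / n)` with `n = 2m + 1`: since
`cos (2π m / n) = -c`, `W` vanishes on the edges of the cycle.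

Lower bound. Take `X` bordered by `X 0 0 = 1`, `X 0 i = d`, with `d I + e A(C_n)` in the vertex
block, `d = (1 + c) / (c n)`, `e = d / (2c)`. Diagonalising the cycle by Fourier modes writes `X`
as `w wᵀ` plus nonnegative multiples of the modes `k = 1, …, n - 1`: the eigenvalues
`d + 2e cos (2πk / n)` are `≥ 0` because `cos (2πk / n) ≥ -cos (π / n)` for odd `n`, and the
eigenvalue `d + 2e = n d²` of the constant mode is exactly the one absorbed by `w = (1, d, …, d)`.
-/

open Real Finset Matrix SimpleGraph

/-- The Gram matrix of the planar vectors `r i • (cos (φ i), sin (φ i))`. -/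
noncomputable def cosGram {ι : Type*} (r φ : ι → ℝ) : Matrix ι ι ℝ :=
  of fun i j => r i * r j * cos (φ i - φ j)

theorem posSemidef_cosGram {ι : Type*} [Fintype ι] (r φ : ι → ℝ) : (cosGram r φ).PosSemidef := by
  have h : cosGram r φ = vecMulVec (fun i => r i * cos (φ i)) (fun i => r i * cos (φ i))
      + vecMulVec (fun i => r i * sin (φ i)) (fun i => r i * sin (φ i)) := by
    ext i j
    simp only [cosGram, of_apply, Matrix.add_apply, vecMulVec_apply, cos_sub]
    ring
  rw [h]
  exact (posSemidef_vecMulVec_self_star _).add (posSemidef_vecMulVec_self_star _)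

/-- The `k`-th Fourier mode of the cycle on the vertices `1, …, n`, bordered by a zero row and
column at index `0`. -/
noncomputable def cycleFourierMode (n k : ℕ) : Matrix (Fin (n + 1)) (Fin (n + 1)) ℝ :=
  cosGram (Fin.cons 0 1) fun i => 2 * π * (i : ℕ) / n * k

theorem posSemidef_cycleFourierMode (n k : ℕ) : (cycleFourierMode n k).PosSemidef :=
  posSemidef_cosGram _ _

@[simp]
theorem cycleFourierMode_zero_left (n k : ℕ) (j : Fin (n + 1)) : cycleFourierMode n k 0 j = 0 := by
  simp [cycleFourierMode, cosGram]

@[simp]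
theorem cycleFourierMode_zero_right (n k : ℕ) (i : Fin (n + 1)) : cycleFourierMode n k i 0 = 0 := by
  simp [cycleFourierMode, cosGram]

@[simp]
theorem cycleFourierMode_succ_succ (n k : ℕ) (i j : Fin n) :
    cycleFourierMode n k i.succ j.succ = cos (2 * π * ((i : ℤ) - j : ℤ) / n * k) := by
  simp only [cycleFourierMode, cosGram, of_apply, Fin.cons_succ, Pi.one_apply, one_mul,
    Fin.val_succ]
  congr 1
  push_cast
  ring

theorem cycleFourierMode_succ_self (n k : ℕ) (i : Fin n) :
    cycleFourierMode n k i.succ i.succ = 1 := by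
  simp

theorem sum_range_cos_two_pi_mul_div (n : ℕ) (hn : n ≠ 0) (m : ℤ) :
    ∑ k ∈ range n, cos (2 * π * m / n * k) = if (n : ℤ) ∣ m then (n : ℝ) else 0 := by
  split_ifs with h
  · obtain ⟨q, rfl⟩ := h
    have hterm (k : ℕ) : cos (2 * π * ((n * q : ℤ) : ℝ) / n * k) = 1 := by
      rw [show 2 * π * ((n * q : ℤ) : ℝ) / n * k = ((q * k : ℤ) : ℝ) * (2 * π) by
        push_cast; field_simp]
      exact cos_int_mul_two_pi _
    rw [sum_congr rfl fun k _ => hterm k]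
    simp
  · have hsin : sin (2 * π * m / n / 2) ≠ 0 := by
      rw [Ne, sin_eq_zero_iff]
      rintro ⟨q, hq⟩
      refine h ⟨q, ?_⟩
      have : (m : ℝ) = n * q := by field_simp at hq; linarith
      exact_mod_cast this
    have hsum := sin_mul_sum_cos n (2 * π * m / n) 0
    rw [show (n : ℝ) * (2 * π * m / n) / 2 = m * π by field_simp, sin_int_mul_pi, zero_mul] at hsum
    simpa [hsin] using hsum

theorem sum_range_mul_cos_two_pi_mul_div (n : ℕ) (hn : n ≠ 0) (a b : ℝ) (m : ℤ) :
    ∑ k ∈ range n, (a + 2 * b * cos (2 * π / n * k)) * cos (2 * π * m / n * k) =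
      n * ((if (n : ℤ) ∣ m then a else 0) + (if (n : ℤ) ∣ m + 1 then b else 0) +
        if (n : ℤ) ∣ m - 1 then b else 0) := by
  have hterm (k : ℕ) : (a + 2 * b * cos (2 * π / n * k)) * cos (2 * π * m / n * k) =
      a * cos (2 * π * m / n * k) + b * cos (2 * π * ((m + 1 : ℤ) : ℝ) / n * k) +
        b * cos (2 * π * ((m - 1 : ℤ) : ℝ) / n * k) := by
    have hadd : 2 * π * ((m + 1 : ℤ) : ℝ) / n * k = 2 * π * m / n * k + 2 * π / n * k := by
      push_cast; ring
    have hsub : 2 * π * ((m - 1 : ℤ) : ℝ) / n * k = 2 * π * m / n * k - 2 * π / n * k := by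
      push_cast; ring
    rw [hadd, hsub, cos_add, cos_sub]
    ring
  simp only [hterm, sum_add_distrib, ← mul_sum, sum_range_cos_two_pi_mul_div n hn]
  split_ifs <;> ring

theorem int_dvd_iff_of_abs_le {n x : ℤ} (hx : |x| ≤ n) : n ∣ x ↔ x = -n ∨ x = 0 ∨ x = n := by
  constructor
  · rintro ⟨q, rfl⟩
    rw [abs_mul] at hx
    have hn : 0 ≤ n := (mul_nonneg (abs_nonneg _) (abs_nonneg _)).trans hx
    rcases hn.eq_or_lt with rfl | hn
    · simp
    have : |q| ≤ 1 := by nlinarith [abs_nonneg n, abs_of_pos hn]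
    rcases abs_le.mp this with ⟨h1, h2⟩
    interval_cases q <;> simp
  · rintro (rfl | rfl | rfl) <;> simp

theorem cycleGraph_adj_iff_val {n : ℕ} (hn : 2 ≤ n) {i j : Fin n} :
    (cycleGraph n).Adj i j ↔
      (i : ℕ) = j + 1 ∨ (j : ℕ) = i + 1 ∨ (i : ℕ) + n = j + 1 ∨ (j : ℕ) + n = i + 1 := by
  rw [cycleGraph_adj']
  have hsub (a b : Fin n) :
      (a - b : Fin n).val = if (b : ℕ) ≤ a then (a : ℕ) - b else n + a - b := by
    split_ifs with h
    · exact Fin.coe_sub_iff_le.mpr h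
    · exact Fin.coe_sub_iff_lt.mpr (not_le.mp h)
  rw [hsub, hsub]
  have := i.isLt; have := j.isLt
  split_ifs <;> omega

theorem sum_range_mul_cos_cycleGraph (n : ℕ) (hn : 3 ≤ n) (a b : ℝ) (i j : Fin n) :
    ∑ k ∈ range n, (a + 2 * b * cos (2 * π / n * k)) * cos (2 * π * ((i : ℤ) - j : ℤ) / n * k) =
      n * ((if i = j then a else 0) + if (cycleGraph n).Adj i j then b else 0) := by
  rw [sum_range_mul_cos_two_pi_mul_div n (by omega)]
  have hi := i.isLt
  have hj := j.isLt
  have hdvd (x : ℤ) (hx : -(n : ℤ) ≤ x ∧ x ≤ n) : (n : ℤ) ∣ x ↔ x = -n ∨ x = 0 ∨ x = n :=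
    int_dvd_iff_of_abs_le (abs_le.mpr hx)
  simp only [hdvd ((i : ℤ) - j) (by omega), hdvd ((i : ℤ) - j + 1) (by omega),
    hdvd ((i : ℤ) - j - 1) (by omega), cycleGraph_adj_iff_val (by omega : 2 ≤ n), Fin.ext_iff]
  split_ifs <;> first | omega | ring

theorem cos_two_pi_mul_div_of_cycleGraph_adj {n : ℕ} (hn : 2 ≤ n) {i j : Fin n}
    (h : (cycleGraph n).Adj i j) (k : ℕ) :
    cos (2 * π * ((i : ℤ) - j : ℤ) / n * k) = cos (2 * π / n * k) := by
  obtain ⟨q, ε, hε, hq⟩ : ∃ q ε : ℤ, (ε = 1 ∨ ε = -1) ∧ (i : ℤ) - j = ε + n * q := by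
    rw [cycleGraph_adj_iff_val hn] at h
    rcases h with h | h | h | h
    exacts [⟨0, 1, by omega⟩, ⟨0, -1, by omega⟩, ⟨-1, 1, by omega⟩, ⟨1, -1, by omega⟩]
  rw [hq, show 2 * π * ((ε + n * q : ℤ) : ℝ) / n * k = ε * (2 * π / n * k) + (q * k : ℤ) * (2 * π)
    by push_cast; field_simp, cos_add_int_mul_two_pi]
  rcases hε with rfl | rfl <;> simp

theorem antiCycleAdj_succ_iff {n : ℕ} (hn : 2 ≤ n) (i j : Fin n) :
    antiCycleAdj n ((i : ℕ) + 1) ((j : ℕ) + 1) ↔ i ≠ j ∧ ¬(cycleGraph n).Adj i j := by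
  have hmod (k : Fin n) : ((k : ℕ) + 1) % n = if (k : ℕ) + 1 = n then 0 else (k : ℕ) + 1 := by
    split_ifs with h
    · rw [h, Nat.mod_self]
    · exact Nat.mod_eq_of_lt (by omega)
  have := i.isLt
  have := j.isLt
  unfold antiCycleAdj
  rw [hmod, hmod, cycleGraph_adj_iff_val hn, ← Fin.val_ne_iff]
  split_ifs <;> omega

theorem cos_pi_div_pos {n : ℕ} (hn : 3 ≤ n) : 0 < cos (π / n) := by
  apply cos_pos_of_mem_Ioo
  have h3 : π / n ≤ π / 3 :=
    div_le_div_of_nonneg_left pi_pos.le (by norm_num) (by exact_mod_cast hn)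
  constructor <;> linarith [pi_pos, div_pos pi_pos (show (0 : ℝ) < n by positivity)]

theorem cos_two_pi_div_mul_half {n : ℕ} (hodd : Odd n) :
    cos (2 * π / n * (n / 2 : ℕ)) = -cos (π / n) := by
  obtain ⟨m, rfl⟩ := hodd
  rw [show (2 * m + 1) / 2 = m by omega, ← cos_pi_sub]
  congr 1
  push_cast
  field_simp
  ring

theorem neg_cos_pi_div_le_cos_two_pi_div_mul {n : ℕ} (hodd : Odd n) {k : ℕ} (hk : k < n) :
    -cos (π / n) ≤ cos (2 * π / n * k) := by
  have hp : 0 < π / n := div_pos pi_pos (by exact_mod_cast hodd.pos)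
  have hn : (n : ℝ) ≠ 0 := by exact_mod_cast hodd.pos.ne'
  have hpi : π - π / n = π / n * (n - 1) := by field_simp
  have hangle : 2 * π / n * k = π / n * (2 * k) := by ring
  obtain ⟨x, hx, hcos⟩ : ∃ x : ℝ, |x| ≤ π - π / n ∧ cos x = cos (2 * π / n * k) := by
    have h2k : 2 * k ≠ n := fun h => Nat.not_even_iff_odd.mpr hodd ⟨k, by omega⟩
    rcases Nat.lt_or_gt_of_ne h2k with h | h
    · have : (2 * k + 1 : ℝ) ≤ n := by exact_mod_cast h
      refine ⟨2 * π / n * k, abs_le.mpr ⟨?_, ?_⟩, rfl⟩ <;> rw [hpi, hangle] <;> nlinarith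
    · have : (n + 1 : ℝ) ≤ 2 * k := by exact_mod_cast h
      have : (k : ℝ) ≤ n := by exact_mod_cast hk.le
      have h2pi : 2 * π = π / n * (2 * n) := by field_simp
      refine ⟨2 * π / n * k - 2 * π, abs_le.mpr ⟨?_, ?_⟩, cos_sub_two_pi _⟩ <;>
        rw [hpi, hangle, h2pi] <;> nlinarith
  rw [← cos_pi_sub, ← hcos, ← cos_abs x]
  exact cos_le_cos_of_nonneg_of_le_pi (abs_nonneg x) (by linarith) hx

theorem thetaPrimalFeasible.sum_diag_le {n : ℕ} {adj : ℕ → ℕ → Prop}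
    {X : Matrix (Fin (n + 1)) (Fin (n + 1)) ℝ} (hX : thetaPrimalFeasible n adj X)
    {W : Matrix (Fin (n + 1)) (Fin (n + 1)) ℝ} (hW : W.PosSemidef)
    (hW0 : ∀ i : Fin n, W 0 i.succ = -1) (hWdiag : ∀ i : Fin n, W i.succ i.succ = 1)
    (hWoff : ∀ i j : Fin n, i ≠ j → ¬adj ((i : ℕ) + 1) ((j : ℕ) + 1) → W i.succ j.succ = 0) :
    ∑ i : Fin n, X i.succ i.succ ≤ W 0 0 := by
  obtain ⟨hXpsd, hX00, hXdiag, hXadj⟩ := hX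
  have hsucc (i : Fin n) : (i.succ : ℕ) ≠ 0 := Nat.succ_ne_zero _
  have hinner : 0 ≤ ∑ i, ∑ j, W i j * X i j := by
    simpa [dotProduct, mulVec, sum_mul] using
      (hW.hadamard hXpsd).dotProduct_mulVec_nonneg (fun _ => 1)
  have hrow0 : ∑ j, W 0 j * X 0 j = W 0 0 - ∑ i : Fin n, X i.succ i.succ := by
    simp [Fin.sum_univ_succ, hX00, hW0, ← hXdiag _ (hsucc _), sub_eq_add_neg]
  have hrow (i : Fin n) : ∑ j, W i.succ j * X i.succ j = 0 := by
    have hXsymm : X i.succ 0 = X i.succ i.succ := by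
      rw [← hXpsd.isHermitian.apply i.succ 0, star_trivial, hXdiag _ (hsucc i)]
    have hWsymm : W i.succ 0 = -1 := by
      rw [← hW.isHermitian.apply i.succ 0, star_trivial, hW0]
    rw [Fin.sum_univ_succ, sum_eq_single i, hXsymm, hWsymm, hWdiag]
    · ring
    · intro j _ hji
      by_cases hadj : adj ((i : ℕ) + 1) ((j : ℕ) + 1)
      · rw [hXadj _ _ (hsucc i) (hsucc j) hadj, mul_zero]
      · rw [hWoff i j (Ne.symm hji) hadj, zero_mul]
    · simp
  rw [Fin.sum_univ_succ, hrow0, sum_congr rfl fun i _ => hrow i, sum_const_zero] at hinner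
  linarith

theorem antiCycle_sum_diag_le {n : ℕ} (hodd : Odd n) (hn : 3 ≤ n)
    {X : Matrix (Fin (n + 1)) (Fin (n + 1)) ℝ} (hX : thetaPrimalFeasible n (antiCycleAdj n) X) :
    ∑ i : Fin n, X i.succ i.succ ≤ (1 + cos (π / n)) / cos (π / n) := by
  set c := cos (π / n)
  have hc : 0 < c := cos_pi_div_pos hn
  let W : Matrix (Fin (n + 1)) (Fin (n + 1)) ℝ :=
    (c / (1 + c)) • vecMulVec (Fin.cons (-((1 + c) / c)) 1) (Fin.cons (-((1 + c) / c)) 1) +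
      (1 / (1 + c)) • cycleFourierMode n (n / 2)
  have hW : W.PosSemidef :=
    ((posSemidef_vecMulVec_self_star _).smul (by positivity)).add
      ((posSemidef_cycleFourierMode _ _).smul (by positivity))
  convert hX.sum_diag_le hW ?_ ?_ ?_ using 1
  · simp only [W, Matrix.add_apply, Matrix.smul_apply, vecMulVec_apply, smul_eq_mul, Fin.cons_zero,
      cycleFourierMode_zero_left]
    field_simp
    ring
  · intro i
    simp only [W, Matrix.add_apply, Matrix.smul_apply, vecMulVec_apply, smul_eq_mul, Fin.cons_zero,
      Fin.cons_succ, Pi.one_apply, cycleFourierMode_zero_left]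
    field_simp
    ring
  · intro i
    simp only [W, Matrix.add_apply, Matrix.smul_apply, vecMulVec_apply, smul_eq_mul, Fin.cons_succ,
      Pi.one_apply, cycleFourierMode_succ_self]
    field_simp
    ring
  · intro i j hij hnadj
    have hadj : (cycleGraph n).Adj i j := by
      by_contra h
      exact hnadj ((antiCycleAdj_succ_iff (by omega) i j).mpr ⟨hij, h⟩)
    simp only [W, Matrix.add_apply, Matrix.smul_apply, vecMulVec_apply, smul_eq_mul, Fin.cons_succ,
      Pi.one_apply, cycleFourierMode_succ_succ,
      cos_two_pi_mul_div_of_cycleGraph_adj (by omega) hadj,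
      cos_two_pi_div_mul_half hodd]
    field_simp
    ring

/-- `1` at `(0, 0)`, `d` on the rest of row and column `0`, and `K` on the vertices `1, …, n`. -/
def borderedMatrix {n : ℕ} (d : ℝ) (K : Matrix (Fin n) (Fin n) ℝ) :
    Matrix (Fin (n + 1)) (Fin (n + 1)) ℝ :=
  of (Fin.cons (Fin.cons 1 fun _ => d) fun i => Fin.cons d (K i))

@[simp]
theorem borderedMatrix_succ_succ {n : ℕ} (d : ℝ) (K : Matrix (Fin n) (Fin n) ℝ) (i j : Fin n) :
    borderedMatrix d K i.succ j.succ = K i j := rfl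

theorem posSemidef_borderedMatrix_cycleGraph {n : ℕ} (hn : 3 ≤ n) {a b d : ℝ}
    (hd : a + 2 * b = n * d ^ 2) (hev : ∀ k < n, 0 ≤ a + 2 * b * cos (2 * π / n * k)) :
    (borderedMatrix d (a • 1 + b • (cycleGraph n).adjMatrix ℝ)).PosSemidef := by
  have hdecomp : borderedMatrix d (a • 1 + b • (cycleGraph n).adjMatrix ℝ) =
      vecMulVec (Fin.cons 1 fun _ => d) (Fin.cons 1 fun _ => d) +
        (n : ℝ)⁻¹ • ∑ k ∈ Ico 1 n, (a + 2 * b * cos (2 * π / n * k)) • cycleFourierMode n k := by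
    ext i j
    induction i using Fin.cases <;> induction j using Fin.cases
    case succ.succ i j =>
      have hsum := sum_range_mul_cos_cycleGraph n hn a b i j
      rw [sum_range_eq_add_Ico _ (by omega)] at hsum
      simp only [Nat.cast_zero, mul_zero, cos_zero, mul_one] at hsum
      simp only [borderedMatrix, of_apply, Fin.cons_succ, Matrix.add_apply, Matrix.smul_apply,
        one_apply, adjMatrix_apply, smul_eq_mul, mul_ite, mul_one, mul_zero,
        vecMulVec_apply, Matrix.sum_apply, cycleFourierMode_succ_succ]
      rw [eq_sub_of_add_eq' hsum, hd]
      field_simp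
      ring
    all_goals simp [borderedMatrix, Matrix.sum_apply, vecMulVec_apply]
  rw [hdecomp]
  refine (posSemidef_vecMulVec_self_star _).add
    (.smul (posSemidef_sum _ fun k hk => ?_) (by positivity))
  exact (posSemidef_cycleFourierMode n k).smul (hev k (mem_Ico.mp hk).2)

theorem thetaPrimalFeasible_borderedMatrix {n : ℕ} {adj : ℕ → ℕ → Prop} {d : ℝ}
    {K : Matrix (Fin n) (Fin n) ℝ} (hpsd : (borderedMatrix d K).PosSemidef)
    (hdiag : ∀ i, K i i = d) (hzero : ∀ i j : Fin n, adj ((i : ℕ) + 1) ((j : ℕ) + 1) → K i j = 0) :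
    thetaPrimalFeasible n adj (borderedMatrix d K) := by
  refine ⟨hpsd, rfl, fun i hi => ?_, fun i j hi hj hadj => ?_⟩
  · obtain ⟨i, rfl⟩ := Fin.exists_succ_eq.mpr (Fin.val_ne_iff.mp hi)
    exact hdiag i
  · obtain ⟨i, rfl⟩ := Fin.exists_succ_eq.mpr (Fin.val_ne_iff.mp hi)
    obtain ⟨j, rfl⟩ := Fin.exists_succ_eq.mpr (Fin.val_ne_iff.mp hj)
    exact hzero i j hadj

theorem antiCycle_exists_feasible_sum_diag_eq {n : ℕ} (hodd : Odd n) (hn : 3 ≤ n) :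
    ∃ X, thetaPrimalFeasible n (antiCycleAdj n) X ∧
      ∑ i : Fin n, X i.succ i.succ = (1 + cos (π / n)) / cos (π / n) := by
  set c := cos (π / n)
  have hc : 0 < c := cos_pi_div_pos hn
  set d := (1 + c) / (c * n) with hd_def
  let K := d • (1 : Matrix (Fin n) (Fin n) ℝ) + (d / (2 * c)) • (cycleGraph n).adjMatrix ℝ
  have hpsd : (borderedMatrix d K).PosSemidef := by
    refine posSemidef_borderedMatrix_cycleGraph hn ?_ fun k hk => ?_
    · rw [hd_def]
      field_simp
      ring
    · have := neg_cos_pi_div_le_cos_two_pi_div_mul hodd hk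
      rw [show d + 2 * (d / (2 * c)) * cos (2 * π / n * k) = d / c * (c + cos (2 * π / n * k)) by
        field_simp]
      exact mul_nonneg (by positivity) (by linarith)
  have hKdiag (i : Fin n) : K i i = d := by simp [K]
  refine ⟨_, thetaPrimalFeasible_borderedMatrix hpsd hKdiag fun i j hadj => ?_, ?_⟩
  · rw [antiCycleAdj_succ_iff (by omega)] at hadj
    simp [K, hadj.1, hadj.2]
  · simp only [borderedMatrix_succ_succ, hKdiag, sum_const, card_univ, Fintype.card_fin,
      nsmul_eq_mul, hd_def]
    field_simp

theorem lovaszTheta_antiCycle (n : ℕ) (hodd : Odd n) (hn : 5 ≤ n) :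
    IsGreatest
      {t : ℝ | ∃ X : Matrix (Fin (n + 1)) (Fin (n + 1)) ℝ,
        thetaPrimalFeasible n (antiCycleAdj n) X ∧ t = ∑ i : Fin n, X i.succ i.succ}
      ((1 + Real.cos (Real.pi / n)) / Real.cos (Real.pi / n)) := by
  have h3 : 3 ≤ n := by omega
  refine ⟨?_, ?_⟩
  · obtain ⟨X, hX, hsum⟩ := antiCycle_exists_feasible_sum_diag_eq hodd h3
    exact ⟨X, hX, hsum.symm⟩
  · rintro _ ⟨X, hX, rfl⟩
    exact antiCycle_sum_diag_le hodd h3 hX
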